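/- Let w(τ,x) = e^{rτ}(1 − e^x)⁺·K − K N(−d₂(τ,x)) + K e^{rτ+x} N(−d₁(τ,x)) where d₁ = (x+(r+σ²/2)τ)/(σ√τ), d₂ = d₁ − σ√τ. Then for p ≥ 1 there is a constant C₀ > 0 depending only on p, σ, r, T, K such that ‖e^{x⁻} ∂_τ w(τ,·)‖_{L^p(ℝ, dx)} ≤ C₀ τ^{1/(2p) − 1/2} for all 0 < τ ≤ T, where x⁻ = min(x,0). -/

import Mathlib

open MeasureTheory Real

/-- Standard normal cumulative distribution function. -/
noncomputable def stdNormalCDF (d : ℝ) : ℝ :=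
  ∫ ξ in Set.Iio d, Real.exp (-ξ ^ 2 / 2) / Real.sqrt (2 * Real.pi)

/-- Black–Scholes argument `d₁(τ,x) = (x + (r + σ²/2)τ)/(σ√τ)`. -/
noncomputable def dOne (σ r τ x : ℝ) : ℝ :=
  (x + (r + σ ^ 2 / 2) * τ) / (σ * Real.sqrt τ)

/-- `d₂ = d₁ − σ√τ`. -/
noncomputable def dTwo (σ r τ x : ℝ) : ℝ :=
  dOne σ r τ x - σ * Real.sqrt τ

/-- `w(τ,x) = e^{rτ} K (1 − e^x)⁺ − K N(−d₂) + K e^{rτ+x} N(−d₁)`. -/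
noncomputable def wPut (σ r K τ x : ℝ) : ℝ :=
  Real.exp (r * τ) * max (1 - Real.exp x) 0 * K -
    K * stdNormalCDF (-(dTwo σ r τ x)) +
    K * Real.exp (r * τ + x) * stdNormalCDF (-(dOne σ r τ x))

/-!
Differentiating in `τ`, the Black–Scholes identity `e^{rτ+x} φ(d₁) = φ(d₂)` cancels the two
terms carrying `∂_τ d₁`, leaving
`∂_τ w = r K e^{rτ} ((1 - e^x)⁺ + e^x N(-d₁)) - K σ φ(d₂) / (2√τ)`.
After multiplication by `e^{x⁻}` the first part is bounded by a multiple of `e^{-|x|}`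
uniformly in `τ ≤ T` (for `x > 0` through the Chernoff bound `N(-d) ≤ e^{-d²/2}`), while the
second is `τ^{-1/2}` times a Gaussian profile of width `σ√τ` in `x`, whose integral is `σ√τ`.
Both profiles take values in `[0, 1]`, so their `p`-th powers are dominated by the profiles
themselves, and `∫ |e^{x⁻} ∂_τ w|^p ≲ 1 + τ^{(1-p)/2} ≲ τ^{(1-p)/2}`.
-/

open ProbabilityTheory

lemma stdNormalCDF_eq_setIntegral_gaussianPDFReal (d : ℝ) :
    stdNormalCDF d = ∫ ξ in Set.Iio d, gaussianPDFReal 0 1 ξ := by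
  simp only [stdNormalCDF, gaussianPDFReal, NNReal.coe_one, mul_one, sub_zero, div_eq_inv_mul]

lemma stdNormalCDF_nonneg (d : ℝ) : 0 ≤ stdNormalCDF d := by
  rw [stdNormalCDF_eq_setIntegral_gaussianPDFReal]
  exact setIntegral_nonneg measurableSet_Iio fun ξ _ => gaussianPDFReal_nonneg 0 1 ξ

lemma stdNormalCDF_le_one (d : ℝ) : stdNormalCDF d ≤ 1 := by
  rw [stdNormalCDF_eq_setIntegral_gaussianPDFReal,
    ← integral_gaussianPDFReal_eq_one 0 one_ne_zero]
  exact setIntegral_le_integral (integrable_gaussianPDFReal 0 1)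
    (Filter.Eventually.of_forall (gaussianPDFReal_nonneg 0 1))

lemma hasDerivAt_stdNormalCDF (d : ℝ) : HasDerivAt stdNormalCDF (gaussianPDFReal 0 1 d) d := by
  have hφ : Integrable (gaussianPDFReal 0 1) := integrable_gaussianPDFReal 0 1
  have hcont : Continuous (gaussianPDFReal 0 1) := by
    rw [gaussianPDFReal_def]; fun_prop
  have hsplit : ∀ y, stdNormalCDF y =
      (∫ ξ in Set.Iic 0, gaussianPDFReal 0 1 ξ) + ∫ ξ in (0 : ℝ)..y, gaussianPDFReal 0 1 ξ := by
    intro y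
    rw [stdNormalCDF_eq_setIntegral_gaussianPDFReal, ← integral_Iic_eq_integral_Iio,
      ← intervalIntegral.integral_Iic_sub_Iic hφ.integrableOn hφ.integrableOn]
    ring
  rw [funext hsplit]
  exact (intervalIntegral.integral_hasDerivAt_right hφ.intervalIntegrable
    hcont.aestronglyMeasurable.stronglyMeasurableAtFilter hcont.continuousAt).const_add _

lemma gaussianPDFReal_zero_one_le_one (ξ : ℝ) : gaussianPDFReal 0 1 ξ ≤ 1 := by
  have hsqrt : 1 ≤ √(2 * π) := Real.one_le_sqrt.2 (by linarith [pi_gt_three])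
  simp only [gaussianPDFReal, NNReal.coe_one, mul_one, sub_zero]
  exact mul_le_one₀ (inv_le_one_of_one_le₀ hsqrt) (exp_pos _).le
    (exp_le_one_iff.2 (by nlinarith [sq_nonneg ξ]))

lemma stdNormalCDF_neg_le_exp {d : ℝ} (hd : 0 ≤ d) : stdNormalCDF (-d) ≤ exp (-d ^ 2 / 2) := by
  have hφ : Integrable (gaussianPDFReal 0 1) := integrable_gaussianPDFReal 0 1
  have hshift : Integrable fun ξ => exp (-d ^ 2 / 2) * gaussianPDFReal 0 1 (ξ + d) :=
    (hφ.comp_add_right d).const_mul _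
  calc stdNormalCDF (-d)
      ≤ ∫ ξ in Set.Iio (-d), exp (-d ^ 2 / 2) * gaussianPDFReal 0 1 (ξ + d) := by
        rw [stdNormalCDF_eq_setIntegral_gaussianPDFReal]
        refine setIntegral_mono_on hφ.integrableOn hshift.integrableOn measurableSet_Iio
          fun ξ hξ => ?_
        simp only [gaussianPDFReal, NNReal.coe_one, mul_one, sub_zero]
        rw [mul_left_comm, ← exp_add]
        gcongr
        nlinarith [Set.mem_Iio.1 hξ]
    _ ≤ ∫ ξ, exp (-d ^ 2 / 2) * gaussianPDFReal 0 1 (ξ + d) :=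
        setIntegral_le_integral hshift
          (Filter.Eventually.of_forall fun ξ =>
            mul_nonneg (exp_pos _).le (gaussianPDFReal_nonneg 0 1 _))
    _ = exp (-d ^ 2 / 2) := by
        rw [integral_const_mul, integral_add_right_eq_self (gaussianPDFReal 0 1),
          integral_gaussianPDFReal_eq_one 0 one_ne_zero, mul_one]

lemma gaussianPDFReal_zero_one_neg (y : ℝ) :
    gaussianPDFReal 0 1 (-y) = gaussianPDFReal 0 1 y := by
  simp [gaussianPDFReal]

lemma dOne_mul (σ r : ℝ) {τ : ℝ} (hσ : σ ≠ 0) (hτ : 0 < τ) (x : ℝ) :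
    dOne σ r τ x * (σ * √τ) = x + (r + σ ^ 2 / 2) * τ := by
  have : σ * √τ ≠ 0 := mul_ne_zero hσ (Real.sqrt_pos.2 hτ).ne'
  rw [dOne, div_mul_cancel₀ _ this]

lemma exp_mul_gaussianPDFReal_dOne (σ r : ℝ) {τ : ℝ} (hσ : σ ≠ 0) (hτ : 0 < τ) (x : ℝ) :
    exp (r * τ + x) * gaussianPDFReal 0 1 (dOne σ r τ x) =
      gaussianPDFReal 0 1 (dTwo σ r τ x) := by
  have h₁ := dOne_mul σ r hσ hτ x
  have hs : √τ ^ 2 = τ := Real.sq_sqrt hτ.le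
  simp only [gaussianPDFReal, NNReal.coe_one, mul_one, sub_zero, dTwo]
  rw [mul_left_comm, ← exp_add]
  congr 2
  linear_combination -h₁ + σ ^ 2 / 2 * hs

lemma differentiableAt_dOne (σ r x : ℝ) {τ : ℝ} (hσ : σ ≠ 0) (hτ : 0 < τ) :
    DifferentiableAt ℝ (fun t => dOne σ r t x) τ :=
  ((((hasDerivAt_id τ).const_mul _).const_add x).div ((Real.hasDerivAt_sqrt hτ.ne').const_mul σ)
    (mul_ne_zero hσ (Real.sqrt_pos.2 hτ).ne')).differentiableAt

lemma hasDerivAt_wPut (σ r K x : ℝ) {τ : ℝ} (hσ : σ ≠ 0) (hτ : 0 < τ) :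
    HasDerivAt (fun t => wPut σ r K t x)
      (r * K * exp (r * τ) * (max (1 - exp x) 0 + exp x * stdNormalCDF (-dOne σ r τ x)) -
        K * σ / (2 * √τ) * gaussianPDFReal 0 1 (dTwo σ r τ x)) τ := by
  set D := deriv (fun t => dOne σ r t x) τ
  have hd₁ : HasDerivAt (fun t => dOne σ r t x) D τ :=
    (differentiableAt_dOne σ r x hσ hτ).hasDerivAt
  have hd₂ : HasDerivAt (fun t => dTwo σ r t x) (D - σ * (1 / (2 * √τ))) τ :=
    hd₁.sub ((Real.hasDerivAt_sqrt hτ.ne').const_mul σ)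
  have hN₁ := (hasDerivAt_stdNormalCDF _).comp τ hd₁.neg
  have hN₂ := (hasDerivAt_stdNormalCDF _).comp τ hd₂.neg
  have hexp := ((hasDerivAt_id τ).const_mul r).exp
  have hexpx := (((hasDerivAt_id τ).const_mul r).add_const x).exp
  have H := (((hexp.mul_const (max (1 - exp x) 0)).mul_const K).sub (hN₂.const_mul K)).add
    ((hexpx.const_mul K).mul hN₁)
  refine H.congr_deriv ?_
  simp only [Function.comp_apply, Pi.neg_apply, gaussianPDFReal_zero_one_neg, id, mul_one]
  linear_combination (-K * D) * exp_mul_gaussianPDFReal_dOne σ r hσ hτ x +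
    r * K * stdNormalCDF (-dOne σ r τ x) * exp_add (r * τ) x

lemma exp_mul_stdNormalCDF_neg_dOne_le {σ r τ x : ℝ} (hσ : 0 < σ) (hr : 0 ≤ r) (hτ : 0 < τ)
    (hx : 0 ≤ x) : exp x * stdNormalCDF (-dOne σ r τ x) ≤ exp (2 * σ ^ 2 * τ - x) := by
  have hs : 0 < σ * √τ := mul_pos hσ (Real.sqrt_pos.2 hτ)
  have hs2 : (σ * √τ) ^ 2 = σ ^ 2 * τ := by rw [mul_pow, Real.sq_sqrt hτ.le]
  have hd₀ : 0 ≤ dOne σ r τ x := div_nonneg (by positivity) hs.le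
  have hd : x ≤ dOne σ r τ x * (σ * √τ) := by
    rw [dOne_mul σ r hσ.ne' hτ x]; nlinarith
  calc exp x * stdNormalCDF (-dOne σ r τ x) ≤ exp x * exp (-dOne σ r τ x ^ 2 / 2) := by
        gcongr; exact stdNormalCDF_neg_le_exp hd₀
    _ ≤ exp (2 * σ ^ 2 * τ - x) := by
        rw [← exp_add]
        gcongr
        nlinarith [sq_nonneg (dOne σ r τ x - 2 * (σ * √τ))]

lemma exp_min_mul_payoff_add_exp_mul_cdf_le {σ r τ T : ℝ} (hσ : 0 < σ) (hr : 0 ≤ r)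
    (hτ : 0 < τ) (hτT : τ ≤ T) (x : ℝ) :
    exp (min x 0) * (max (1 - exp x) 0 + exp x * stdNormalCDF (-dOne σ r τ x)) ≤
      2 * exp (2 * σ ^ 2 * T) * exp (-|x|) := by
  have hστ : σ ^ 2 * τ ≤ σ ^ 2 * T := mul_le_mul_of_nonneg_left hτT (sq_nonneg σ)
  have hT : 1 ≤ exp (2 * σ ^ 2 * T) := one_le_exp (by nlinarith [sq_nonneg σ])
  rcases le_or_gt x 0 with hx | hx
  · have hex : exp x ≤ 1 := exp_le_one_iff.2 hx
    have hP : max (1 - exp x) 0 + exp x * stdNormalCDF (-dOne σ r τ x) ≤ 2 := by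
      have h₁ : max (1 - exp x) 0 ≤ 1 := max_le (by linarith [exp_pos x]) zero_le_one
      have h₂ : exp x * stdNormalCDF (-dOne σ r τ x) ≤ 1 :=
        mul_le_one₀ hex (stdNormalCDF_nonneg _) (stdNormalCDF_le_one _)
      linarith
    rw [min_eq_left hx, abs_of_nonpos hx, neg_neg]
    nlinarith [exp_pos x]
  · rw [min_eq_right hx.le, abs_of_pos hx, exp_zero, one_mul,
      max_eq_right (by linarith [add_one_le_exp x]), zero_add]
    calc exp x * stdNormalCDF (-dOne σ r τ x) ≤ exp (2 * σ ^ 2 * τ - x) :=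
          exp_mul_stdNormalCDF_neg_dOne_le hσ hr hτ hx.le
      _ ≤ exp (2 * σ ^ 2 * T) * exp (-x) := by rw [← exp_add]; gcongr; linarith
      _ ≤ 2 * exp (2 * σ ^ 2 * T) * exp (-x) := by nlinarith [exp_pos (-x)]

lemma abs_exp_min_mul_deriv_wPut_le {σ r K τ T : ℝ} (hσ : 0 < σ) (hr : 0 ≤ r) (hK : 0 < K)
    (hτ : 0 < τ) (hτT : τ ≤ T) (x : ℝ) :
    |exp (min x 0) * deriv (fun t => wPut σ r K t x) τ| ≤
      2 * r * K * exp (r * T + 2 * σ ^ 2 * T) * exp (-|x|) +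
        K * σ / (2 * √τ) * gaussianPDFReal 0 1 (dTwo σ r τ x) := by
  rw [(hasDerivAt_wPut σ r K x hσ.ne' hτ).deriv]
  set P := max (1 - exp x) 0 + exp x * stdNormalCDF (-dOne σ r τ x)
  set G := K * σ / (2 * √τ) * gaussianPDFReal 0 1 (dTwo σ r τ x)
  have hP : 0 ≤ P := add_nonneg (le_max_right _ _)
    (mul_nonneg (exp_pos x).le (stdNormalCDF_nonneg _))
  have hG : 0 ≤ G := mul_nonneg (by positivity) (gaussianPDFReal_nonneg 0 1 _)
  have hm : exp (min x 0) ≤ 1 := exp_le_one_iff.2 (min_le_right x 0)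
  have hdrift : exp (min x 0) * (r * K * exp (r * τ) * P) ≤
      2 * r * K * exp (r * T + 2 * σ ^ 2 * T) * exp (-|x|) :=
    calc exp (min x 0) * (r * K * exp (r * τ) * P)
        = r * K * exp (r * τ) * (exp (min x 0) * P) := by ring
      _ ≤ r * K * exp (r * T) * (2 * exp (2 * σ ^ 2 * T) * exp (-|x|)) := by
        exact mul_le_mul (by gcongr) (exp_min_mul_payoff_add_exp_mul_cdf_le hσ hr hτ hτT x)
          (by positivity) (by positivity)
      _ = 2 * r * K * exp (r * T + 2 * σ ^ 2 * T) * exp (-|x|) := by rw [exp_add]; ring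
  have hgauss : exp (min x 0) * G ≤ G := mul_le_of_le_one_left hG hm
  have hdrift₀ : 0 ≤ exp (min x 0) * (r * K * exp (r * τ) * P) := by positivity
  have hgauss₀ : 0 ≤ exp (min x 0) * G := by positivity
  rw [abs_le, mul_sub]
  constructor <;> linarith

lemma Real.rpow_add_le_mul_rpow_add_rpow {a b p : ℝ} (ha : 0 ≤ a) (hb : 0 ≤ b) (hp : 1 ≤ p) :
    (a + b) ^ p ≤ 2 ^ (p - 1) * (a ^ p + b ^ p) := by
  lift a to NNReal using ha
  lift b to NNReal using hb
  exact_mod_cast NNReal.rpow_add_le_mul_rpow_add_rpow a b hp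

lemma integral_abs_rpow_le_of_abs_le_add {α : Type*} [MeasurableSpace α] {μ : Measure α}
    {f u v : α → ℝ} {a b p : ℝ} (hp : 1 ≤ p) (ha : 0 ≤ a) (hb : 0 ≤ b)
    (hu : Integrable u μ) (hv : Integrable v μ) (hu₀ : ∀ x, 0 ≤ u x) (hu₁ : ∀ x, u x ≤ 1)
    (hv₀ : ∀ x, 0 ≤ v x) (hv₁ : ∀ x, v x ≤ 1) (hf : ∀ x, |f x| ≤ a * u x + b * v x) :
    ∫ x, |f x| ^ p ∂μ ≤ 2 ^ (p - 1) * (a ^ p * ∫ x, u x ∂μ + b ^ p * ∫ x, v x ∂μ) := by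
  have hpoint : ∀ x, |f x| ^ p ≤ 2 ^ (p - 1) * (a ^ p * u x + b ^ p * v x) := fun x =>
    calc |f x| ^ p ≤ (a * u x + b * v x) ^ p := by gcongr; exact hf x
      _ ≤ 2 ^ (p - 1) * ((a * u x) ^ p + (b * v x) ^ p) :=
        Real.rpow_add_le_mul_rpow_add_rpow (mul_nonneg ha (hu₀ x)) (mul_nonneg hb (hv₀ x)) hp
      _ = 2 ^ (p - 1) * (a ^ p * u x ^ p + b ^ p * v x ^ p) := by
        rw [Real.mul_rpow ha (hu₀ x), Real.mul_rpow hb (hv₀ x)]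
      _ ≤ 2 ^ (p - 1) * (a ^ p * u x + b ^ p * v x) := by
        gcongr
        · exact Real.rpow_le_self_of_le_one (hu₀ x) (hu₁ x) hp
        · exact Real.rpow_le_self_of_le_one (hv₀ x) (hv₁ x) hp
  calc ∫ x, |f x| ^ p ∂μ ≤ ∫ x, 2 ^ (p - 1) * (a ^ p * u x + b ^ p * v x) ∂μ :=
        integral_mono_of_nonneg (Filter.Eventually.of_forall fun x => by positivity)
          (((hu.const_mul _).add (hv.const_mul _)).const_mul _)
          (Filter.Eventually.of_forall hpoint)
    _ = 2 ^ (p - 1) * (a ^ p * ∫ x, u x ∂μ + b ^ p * ∫ x, v x ∂μ) := by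
        rw [integral_const_mul, integral_add (hu.const_mul _) (hv.const_mul _),
          integral_const_mul, integral_const_mul]

lemma integrable_exp_neg_abs : Integrable fun x : ℝ => exp (-|x|) := by
  rw [← integrableOn_univ, ← Set.Iic_union_Ioi (a := 0), integrableOn_union]
  constructor
  · refine (integrableOn_exp_Iic 0).congr_fun (fun x hx => ?_) measurableSet_Iic
    rw [abs_of_nonpos (Set.mem_Iic.1 hx), neg_neg]
  · refine (integrableOn_exp_neg_Ioi 0).congr_fun (fun x hx => ?_) measurableSet_Ioi
    rw [abs_of_pos (Set.mem_Ioi.1 hx)]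

lemma dTwo_eq_div_add (σ r τ x : ℝ) :
    dTwo σ r τ x = x / (σ * √τ) + ((r + σ ^ 2 / 2) * τ / (σ * √τ) - σ * √τ) := by
  rw [dTwo, dOne, add_div]; ring

lemma integrable_gaussianPDFReal_dTwo (σ r : ℝ) {τ : ℝ} (hσ : σ ≠ 0) (hτ : 0 < τ) :
    Integrable fun x => gaussianPDFReal 0 1 (dTwo σ r τ x) := by
  simp only [dTwo_eq_div_add]
  exact ((integrable_gaussianPDFReal 0 1).comp_add_right _).comp_div
    (mul_ne_zero hσ (Real.sqrt_pos.2 hτ).ne')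

lemma integral_gaussianPDFReal_dTwo {σ : ℝ} (r τ : ℝ) (hσ : 0 ≤ σ) :
    ∫ x, gaussianPDFReal 0 1 (dTwo σ r τ x) = σ * √τ := by
  simp only [dTwo_eq_div_add]
  rw [Measure.integral_comp_div (fun y => gaussianPDFReal 0 1 (y + _)),
    integral_add_right_eq_self (gaussianPDFReal 0 1),
    integral_gaussianPDFReal_eq_one 0 one_ne_zero, smul_eq_mul, mul_one,
    abs_of_nonneg (by positivity)]

lemma div_sqrt_rpow_mul_sqrt {c τ : ℝ} (p : ℝ) (hc : 0 ≤ c) (hτ : 0 < τ) :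
    (c / √τ) ^ p * √τ = c ^ p * τ ^ ((1 - p) / 2) := by
  have hτ' : τ ^ ((1 - p) / 2) = τ ^ (1 / 2 : ℝ) / τ ^ (1 / 2 * p) := by
    rw [← Real.rpow_sub hτ]; ring_nf
  rw [Real.div_rpow hc (Real.sqrt_nonneg τ), Real.sqrt_eq_rpow, ← Real.rpow_mul hτ.le, hτ']
  ring

lemma one_le_rpow_mul_rpow_neg {τ T e : ℝ} (hτ : 0 < τ) (hτT : τ ≤ T) (he : 0 ≤ e) :
    1 ≤ T ^ e * τ ^ (-e) := by
  rw [Real.rpow_neg hτ.le, ← div_eq_mul_inv, one_le_div (Real.rpow_pos_of_pos hτ e)]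
  exact Real.rpow_le_rpow hτ.le hτT he

lemma add_div_sqrt_rpow_mul_le {A c s τ T p : ℝ} (hA : 0 ≤ A) (hc : 0 ≤ c) (hτ : 0 < τ)
    (hτT : τ ≤ T) (hp : 1 ≤ p) :
    A + (c / √τ) ^ p * (s * √τ) ≤ (A * T ^ ((p - 1) / 2) + c ^ p * s) * τ ^ ((1 - p) / 2) := by
  have hT := one_le_rpow_mul_rpow_neg hτ hτT (e := (p - 1) / 2) (by linarith)
  rw [← neg_div, neg_sub] at hT
  have hA' : A ≤ A * (T ^ ((p - 1) / 2) * τ ^ ((1 - p) / 2)) := le_mul_of_one_le_right hA hT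
  rw [mul_left_comm, div_sqrt_rpow_mul_sqrt p hc hτ]
  linarith

lemma rpow_one_div_le_of_le_mul_rpow {I C τ p : ℝ} (hI : 0 ≤ I) (hC : 0 ≤ C) (hτ : 0 < τ)
    (hp : 0 < p) (h : I ≤ C * τ ^ ((1 - p) / 2)) :
    I ^ (1 / p) ≤ C ^ (1 / p) * τ ^ (1 / (2 * p) - 1 / 2) :=
  calc I ^ (1 / p) ≤ (C * τ ^ ((1 - p) / 2)) ^ (1 / p) := by gcongr
    _ = C ^ (1 / p) * τ ^ (1 / (2 * p) - 1 / 2) := by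
      rw [Real.mul_rpow hC (by positivity), ← Real.rpow_mul hτ.le]
      congr 2
      field_simp

/-- `‖e^{x⁻} ∂_τ w(τ,·)‖_{L^p} ≤ C₀ τ^{1/(2p)−1/2}` for `0 < τ ≤ T`. -/
theorem put_obstacle_time_derivative_Lp_bound
    (σ r K p T : ℝ) (hσ : 0 < σ) (hr : 0 ≤ r) (hK : 0 < K)
    (hp : 1 ≤ p) (hT : 0 < T) :
    ∃ C₀ : ℝ, 0 < C₀ ∧ ∀ τ : ℝ, 0 < τ → τ ≤ T →
      (∫ x : ℝ, |Real.exp (min x 0) * deriv (fun t => wPut σ r K t x) τ| ^ p) ^ (1 / p) ≤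
        C₀ * τ ^ (1 / (2 * p) - 1 / 2) := by
  refine ⟨(2 ^ (p - 1) * ((2 * r * K * exp (r * T + 2 * σ ^ 2 * T)) ^ p * (∫ x, exp (-|x|)) *
      T ^ ((p - 1) / 2) + (K * σ / 2) ^ p * σ)) ^ (1 / p), by positivity, fun τ hτ hτT => ?_⟩
  have hI := integral_abs_rpow_le_of_abs_le_add hp (by positivity) (by positivity)
    integrable_exp_neg_abs (integrable_gaussianPDFReal_dTwo σ r hσ.ne' hτ)
    (fun x => (exp_pos _).le) (fun x => exp_le_one_iff.2 (neg_nonpos.2 (abs_nonneg x)))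
    (fun x => gaussianPDFReal_nonneg 0 1 _) (fun x => gaussianPDFReal_zero_one_le_one _)
    (abs_exp_min_mul_deriv_wPut_le hσ hr hK hτ hτT)
  rw [integral_gaussianPDFReal_dTwo r τ hσ.le, ← div_div] at hI
  refine rpow_one_div_le_of_le_mul_rpow (by positivity) (by positivity) hτ (by linarith) ?_
  rw [mul_assoc]
  exact hI.trans (mul_le_mul_of_nonneg_left
    (add_div_sqrt_rpow_mul_le (by positivity) (by positivity) hτ hτT hp) (by positivity))
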